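/- arXiv:2411.03026 — 2 statements merged into one kernel-verified Lean document; each statement's English description precedes it below -/
import Mathlib

section
/- Let L be a linear subspace of ℝⁿ, let q̂⁰, ε ∈ ℝⁿ with P_L q̂⁰ ≠ 0, and set q⁰ = q̂⁰ − ε. Then the intervention σ = P_L q̂⁰ / ‖P_L q̂⁰‖² satisfies σ·q⁰ = 1 − (P_L q̂⁰ · P_L ε)/‖P_L q̂⁰‖², and in particular σ·q⁰ ≥ 1 − ‖P_L ε‖ / ‖P_L q̂⁰‖. -/
noncomputable section
open Matrix MeasureTheory Filter

/-- Vectors in `ℝⁿ` with the Euclidean norm/inner product. -/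
abbrev Vec (n : ℕ) := EuclideanSpace ℝ (Fin n)

variable {n : ℕ}

/-- Price effect `ṗ = −(I − D)⁻¹ σ`. -/
def pDot (D : Matrix (Fin n) (Fin n) ℝ) (σ : Vec n) : Vec n :=
  -(Matrix.toEuclideanLin (1 - D)⁻¹ σ)

/-- Quantity effect `q̇ = D ṗ`. -/
def qDot (D : Matrix (Fin n) (Fin n) ℝ) (σ : Vec n) : Vec n :=
  Matrix.toEuclideanLin D (pDot D σ)

/-- Expenditure derivative `Ṡ = σ·q⁰`. -/
def SDot (q σ : Vec n) : ℝ := inner ℝ σ q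

/-- Consumer surplus derivative `Ċ = −q⁰·ṗ`. -/
def CDot (D : Matrix (Fin n) (Fin n) ℝ) (q σ : Vec n) : ℝ := -(inner ℝ q (pDot D σ) : ℝ)

/-- Producer surplus derivative `Ṗ = 2 q⁰·q̇`. -/
def PDot (D : Matrix (Fin n) (Fin n) ℝ) (q σ : Vec n) : ℝ := 2 * (inner ℝ q (qDot D σ) : ℝ)

/-- Total surplus derivative `Ẇ = Ċ + Ṗ − Ṡ`. -/
def WDot (D : Matrix (Fin n) (Fin n) ℝ) (q σ : Vec n) : ℝ :=
  CDot D q σ + PDot D q σ - SDot q σ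

/-- A normalized Slutsky matrix: symmetric, negative semidefinite, diagonal entries `−1`. -/
def IsSlutsky (D : Matrix (Fin n) (Fin n) ℝ) : Prop :=
  D.IsSymm ∧ (-D).PosSemidef ∧ ∀ i, D i i = -1

/-- The span of the eigenvectors of a matrix whose eigenvalues are at least `M`
in absolute value. -/
def eigSpan (A : Matrix (Fin n) (Fin n) ℝ) (M : ℝ) : Submodule ℝ (Vec n) :=
  ⨆ μ ∈ {μ : ℝ | M ≤ |μ|}, Module.End.eigenspace (Matrix.toEuclideanLin A) μ

/-- Orthogonal projection onto a subspace, as a map into the ambient space. -/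
def projVec (V : Submodule ℝ (Vec n)) (x : Vec n) : Vec n :=
  (Submodule.orthogonalProjection V x : Vec n)

/-- Orthogonal projection onto a subspace, as a continuous linear endomorphism. -/
def projCLM (V : Submodule ℝ (Vec n)) : Vec n →L[ℝ] Vec n :=
  V.subtypeL.comp (Submodule.orthogonalProjection V)

/-- Spectral (operator) norm of a matrix. -/
def specNorm (A : Matrix (Fin n) (Fin n) ℝ) : ℝ :=
  ‖LinearMap.toContinuousLinearMap (Matrix.toEuclideanLin A)‖

/-! Since `P_L` is a self-adjoint idempotent and `P_L q̂⁰` lies in `L`, pairing with `P_L q̂⁰`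
sees only the `L`-components: `P_L q̂⁰ · q̂⁰ = ‖P_L q̂⁰‖²` and `P_L q̂⁰ · ε = P_L q̂⁰ · P_L ε`.
This gives the identity, and Cauchy–Schwarz on `P_L q̂⁰ · P_L ε` gives the bound. -/

open scoped InnerProductSpace

theorem Submodule.inner_starProjection_left_eq_inner_starProjection {𝕜 E : Type*} [RCLike 𝕜]
    [NormedAddCommGroup E] [InnerProductSpace 𝕜 E] (K : Submodule 𝕜 E)
    [K.HasOrthogonalProjection] (u v : E) :
    ⟪K.starProjection u, v⟫_𝕜 = ⟪K.starProjection u, K.starProjection v⟫_𝕜 := by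
  rw [← K.inner_starProjection_left_eq_right, K.starProjection_eq_self_iff.mpr
    (K.starProjection_apply_mem u)]

section RealInnerProductSpace

variable {E : Type*} [NormedAddCommGroup E] [InnerProductSpace ℝ E]

theorem real_inner_div_norm_sq_le_norm_div_norm (u v : E) :
    ⟪u, v⟫_ℝ / ‖u‖ ^ 2 ≤ ‖v‖ / ‖u‖ := by
  rcases eq_or_ne u 0 with rfl | hu
  · simp
  have hu' : 0 < ‖u‖ := norm_pos_iff.mpr hu
  calc ⟪u, v⟫_ℝ / ‖u‖ ^ 2 ≤ ‖u‖ * ‖v‖ / ‖u‖ ^ 2 := by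
        gcongr
        exact real_inner_le_norm u v
    _ = ‖v‖ / ‖u‖ := by field_simp

theorem real_inner_inv_norm_sq_smul_sub {u a : E} (hu : u ≠ 0) (ha : ⟪u, a⟫_ℝ = ‖u‖ ^ 2)
    (e : E) : ⟪(‖u‖ ^ 2)⁻¹ • u, a - e⟫_ℝ = 1 - ⟪u, e⟫_ℝ / ‖u‖ ^ 2 := by
  have hu' : ‖u‖ ≠ 0 := norm_ne_zero_iff.mpr hu
  rw [real_inner_smul_left, inner_sub_right, ha]
  field_simp

end RealInnerProductSpace

theorem projVec_eq_starProjection (V : Submodule ℝ (Vec n)) (x : Vec n) :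
    projVec V x = V.starProjection x :=
  rfl

/-- the normalized-projection intervention has expenditure derivative
1 - (P_L qhat . P_L eps)/normsq(P_L qhat), which is at least 1 - norm(P_L eps)/norm(P_L qhat). -/
theorem stmt10 (n : ℕ) (L : Submodule ℝ (Vec n)) (qhat ε : Vec n)
    (h : projVec L qhat ≠ 0) :
    (inner ℝ ((‖projVec L qhat‖ ^ 2)⁻¹ • projVec L qhat) (qhat - ε) : ℝ) =
        1 - (inner ℝ (projVec L qhat) (projVec L ε) : ℝ) / ‖projVec L qhat‖ ^ 2 ∧
    1 - ‖projVec L ε‖ / ‖projVec L qhat‖ ≤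
      (inner ℝ ((‖projVec L qhat‖ ^ 2)⁻¹ • projVec L qhat) (qhat - ε) : ℝ) := by
  simp only [projVec_eq_starProjection] at h ⊢
  have hqhat : ⟪L.starProjection qhat, qhat⟫_ℝ = ‖L.starProjection qhat‖ ^ 2 := by
    rw [L.inner_starProjection_left_eq_inner_starProjection, real_inner_self_eq_norm_sq]
  have hσ := real_inner_inv_norm_sq_smul_sub h hqhat ε
  rw [L.inner_starProjection_left_eq_inner_starProjection qhat ε] at hσ
  refine ⟨hσ, ?_⟩
  rw [hσ]
  linarith [real_inner_div_norm_sq_le_norm_div_norm (L.starProjection qhat) (L.starProjection ε)]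
end
end

section
/- Let n ≥ 2, u¹ = n^{−1/2}·𝟙, and D* = −(n/2)·u¹(u¹)ᵀ − (1/2)·I. Then D* is a normalized Slutsky matrix with eigenvalue −(n+1)/2 on span(u¹) and eigenvalue −1/2 on the orthogonal complement of u¹. Moreover, let (u²,…,uⁿ) be any orthonormal basis of the orthogonal complement of u¹, let s₂,…,sₙ ∈ {−1, +1}, let 0 < f ≤ (n−1)^{−1/2}, and set q⁰ = (1/2)·(u¹ + f·Σ_{ℓ=2}^n s_ℓ u^ℓ). Then ‖q⁰‖ ≤ 1 and, for every M with 1/2 < M ≤ (n+1)/2, the projection of q⁰ onto L(D*, M) equals (1/2)·u¹ and has norm 1/2; in particular the market state (D*, q⁰) has (M, 0.49)-recoverable structure. -/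
noncomputable section
open Matrix MeasureTheory Filter

variable {n : ℕ}

/-- The all-ones vector. -/
def onesV (n : ℕ) : Vec n := WithLp.toLp 2 (fun _ => (1 : ℝ))

/-!
`D*` is a rank-one update `a • u uᵀ - b • 1` of a scalar matrix, acting as
`v ↦ (a ⟪u, v⟫) u - b v`. For a unit vector `u`, the vector `u` is an eigenvector for `a - b`, its
orthogonal complement is the eigenspace for `-b`, and every eigenvector for an eigenvalue `μ ≠ -b`
lies on the line `ℝ u`, since `(μ + b) v = (a ⟪u, v⟫) u`. So for `|b| < M ≤ |a - b|` the space
`L(D*, M)` is exactly `ℝ u¹`, and the projection of `q⁰` onto it is `⟪u¹, q⁰⟫ u¹ = u¹ / 2`, the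
perturbation `∑ s_ℓ u^ℓ` being orthogonal to `u¹`. That perturbation has norm `√(n - 1)`, which the
bound on `f` compensates, so `‖q⁰‖ ≤ (1 + 1) / 2`.
-/

section RankOneUpdate

variable (u : Vec n) (a b : ℝ)

theorem toEuclideanLin_smul_vecMulVec_sub_smul_one (v : Vec n) :
    toEuclideanLin (a • vecMulVec ⇑u ⇑u - b • 1) v = (a * inner ℝ u v) • u - b • v := by
  ext i
  change ((a • vecMulVec ⇑u ⇑u - b • 1) *ᵥ ⇑v) i = _
  simp [sub_mulVec, smul_mulVec, vecMulVec_mulVec, EuclideanSpace.inner_eq_star_dotProduct,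
    dotProduct_comm, mul_assoc]

theorem isSymm_smul_vecMulVec_sub_smul_one : (a • vecMulVec ⇑u ⇑u - b • 1).IsSymm :=
  ((by simp [IsSymm, transpose_vecMulVec] : (vecMulVec ⇑u ⇑u).IsSymm).smul a).sub
    (isSymm_one.smul b)

theorem posSemidef_neg_smul_vecMulVec_sub_smul_one (ha : a ≤ 0) (hb : 0 ≤ b) :
    (-(a • vecMulVec ⇑u ⇑u - b • 1)).PosSemidef := by
  rw [neg_sub, sub_eq_add_neg, ← neg_smul]
  exact (PosSemidef.one.smul hb).add
    ((posSemidef_vecMulVec_self_star (⇑u)).smul (neg_nonneg.2 ha))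

theorem toEuclideanLin_smul_vecMulVec_sub_smul_one_self (hu : ‖u‖ = 1) :
    toEuclideanLin (a • vecMulVec ⇑u ⇑u - b • 1) u = (a - b) • u := by
  rw [toEuclideanLin_smul_vecMulVec_sub_smul_one, real_inner_self_eq_norm_sq, hu]
  module

theorem toEuclideanLin_smul_vecMulVec_sub_smul_one_of_inner_eq_zero {v : Vec n}
    (hv : inner ℝ u v = 0) : toEuclideanLin (a • vecMulVec ⇑u ⇑u - b • 1) v = (-b) • v := by
  rw [toEuclideanLin_smul_vecMulVec_sub_smul_one, hv]
  module

theorem eigenspace_smul_vecMulVec_sub_smul_one_le_span {μ : ℝ} (hμ : μ ≠ -b) :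
    Module.End.eigenspace (toEuclideanLin (a • vecMulVec ⇑u ⇑u - b • 1)) μ ≤ ℝ ∙ u := by
  intro v hv
  rw [Module.End.mem_eigenspace_iff, toEuclideanLin_smul_vecMulVec_sub_smul_one] at hv
  have hμb : μ + b ≠ 0 := by contrapose! hμ; linarith
  refine Submodule.mem_span_singleton.2 ⟨(μ + b)⁻¹ * (a * inner ℝ u v), ?_⟩
  have hv' : (μ + b) • v = (a * inner ℝ u v) • u := by rw [add_smul, ← hv]; abel
  rw [mul_smul, ← hv', smul_smul, inv_mul_cancel₀ hμb, one_smul]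

theorem eigSpan_smul_vecMulVec_sub_smul_one (hu : ‖u‖ = 1) {M : ℝ} (hbM : |b| < M)
    (hMab : M ≤ |a - b|) : eigSpan (a • vecMulVec ⇑u ⇑u - b • 1) M = ℝ ∙ u := by
  refine le_antisymm (iSup₂_le fun μ hμ => ?_) ?_
  · refine eigenspace_smul_vecMulVec_sub_smul_one_le_span u a b ?_
    rintro rfl
    have hMb : M ≤ |b| := by simpa using hμ
    linarith
  · rw [Submodule.span_le, Set.singleton_subset_iff]
    exact Submodule.mem_iSup_of_mem (a - b) (Submodule.mem_iSup_of_mem hMab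
      (Module.End.mem_eigenspace_iff.2 (toEuclideanLin_smul_vecMulVec_sub_smul_one_self u a b hu)))

end RankOneUpdate

theorem norm_inv_sqrt_smul_onesV (hn : 0 < n) : ‖(√n)⁻¹ • onesV n‖ = 1 := by
  have hsqrt : 0 < √(n : ℝ) := Real.sqrt_pos.2 (Nat.cast_pos.2 hn)
  rw [norm_smul, EuclideanSpace.norm_eq]
  simp [onesV, abs_of_pos hsqrt, hsqrt.ne']

theorem isSlutsky_neg_half_smul_vecMulVec_sub_half_smul_one (hn : 0 < n) :
    IsSlutsky ((-((n : ℝ) / 2)) • vecMulVec ⇑((√n)⁻¹ • onesV n) ⇑((√n)⁻¹ • onesV n) -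
      (1 / 2 : ℝ) • (1 : Matrix (Fin n) (Fin n) ℝ)) := by
  have hn' : (0 : ℝ) < n := Nat.cast_pos.2 hn
  refine ⟨isSymm_smul_vecMulVec_sub_smul_one _ _ _,
    posSemidef_neg_smul_vecMulVec_sub_smul_one _ _ _ (by linarith) (by norm_num), fun i => ?_⟩
  have hui : ((√n)⁻¹ • onesV n) i = (√n)⁻¹ := by simp [onesV]
  simp only [Matrix.sub_apply, Matrix.smul_apply, vecMulVec_apply, one_apply_eq, smul_eq_mul, hui,
    ← mul_inv, Real.mul_self_sqrt hn'.le]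
  field_simp
  ring

theorem projVec_span_singleton {u : Vec n} (hu : ‖u‖ = 1) (x : Vec n) :
    projVec (ℝ ∙ u) x = inner ℝ u x • u := by
  rw [projVec, ← Submodule.starProjection_apply, Submodule.starProjection_unit_singleton ℝ hu]

section Orthonormal

variable {ι E : Type*} [NormedAddCommGroup E]

theorem Orthonormal.inner_right_sum_of_notMem {𝕜 : Type*} [RCLike 𝕜] [InnerProductSpace 𝕜 E]
    {v : ι → E} (hv : Orthonormal 𝕜 v) (l : ι → 𝕜) {s : Finset ι} {i : ι} (hi : i ∉ s) :
    inner 𝕜 (v i) (∑ j ∈ s, l j • v j) = 0 := by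
  rw [inner_sum]
  refine Finset.sum_eq_zero fun j hj => ?_
  rw [inner_smul_right, hv.inner_eq_zero (ne_of_mem_of_not_mem hj hi).symm, mul_zero]

theorem Orthonormal.norm_sum_smul_of_abs_eq_one [InnerProductSpace ℝ E] {v : ι → E}
    (hv : Orthonormal ℝ v) {l : ι → ℝ} {s : Finset ι} (hl : ∀ i ∈ s, |l i| = 1) :
    ‖∑ i ∈ s, l i • v i‖ = √(s.card : ℝ) := by
  rw [← Real.sqrt_sq (norm_nonneg _), ← real_inner_self_eq_norm_sq, hv.inner_sum]
  congr 1
  rw [Finset.card_eq_sum_ones, Nat.cast_sum]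
  refine Finset.sum_congr rfl fun i hi => ?_
  rw [conj_trivial, ← abs_mul_abs_self, hl i hi, mul_one, Nat.cast_one]

theorem Orthonormal.norm_sum_filter_ne_smul {v : Fin n → E} [InnerProductSpace ℝ E]
    (hv : Orthonormal ℝ v) {i₀ : Fin n} {s : Fin n → ℝ}
    (hs : ∀ ℓ, ℓ ≠ i₀ → s ℓ = 1 ∨ s ℓ = -1) :
    ‖∑ ℓ ∈ Finset.univ.filter (· ≠ i₀), s ℓ • v ℓ‖ = √((n : ℝ) - 1) := by
  have hn : 1 ≤ n := Fin.pos i₀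
  rw [hv.norm_sum_smul_of_abs_eq_one fun ℓ hℓ => ?_]
  · simp [Finset.filter_ne', Nat.cast_sub hn]
  · rcases hs ℓ (Finset.mem_filter.1 hℓ).2 with h | h <;> simp [h]

end Orthonormal

theorem norm_smul_le_one_of_le_inv_norm {E : Type*} [SeminormedAddCommGroup E] [NormedSpace ℝ E]
    {f : ℝ} {w : E} (hf : 0 ≤ f) (hfw : f ≤ ‖w‖⁻¹) : ‖f • w‖ ≤ 1 := by
  rw [norm_smul, Real.norm_of_nonneg hf]
  rcases (norm_nonneg w).eq_or_lt with hw | hw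
  · simp [← hw]
  · exact (le_div_iff₀ hw).1 (by rwa [one_div])

/-- for D* = -(n/2) u1 u1^T - (1/2) I with u1 = n^{-1/2} 1: D* is a
normalized Slutsky matrix with eigenvalue -(n+1)/2 on span(u1) and -1/2 on its
orthogonal complement; and for q0 = (1/2)(u1 + f * sum s_l u^l) built from an
orthonormal basis of the complement and signs s_l, with 0 < f ≤ (n-1)^{-1/2}, one has
norm(q0) ≤ 1 and, for 1/2 < M ≤ (n+1)/2, the projection of q0 onto L(D*,M) equals
(1/2) u1 and has norm 1/2 ≥ 0.49 (so the state has (M, 0.49)-recoverable structure). -/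
theorem stmt15 (n : ℕ) (hn : 2 ≤ n)
    (u1 : Vec n) (hu1 : u1 = (Real.sqrt n)⁻¹ • onesV n)
    (Dstar : Matrix (Fin n) (Fin n) ℝ)
    (hDstar : Dstar = (-((n : ℝ) / 2)) • Matrix.of (fun i j => u1 i * u1 j) -
      (1 / 2 : ℝ) • (1 : Matrix (Fin n) (Fin n) ℝ)) :
    (IsSlutsky Dstar ∧
      Matrix.toEuclideanLin Dstar u1 = (-(((n : ℝ) + 1) / 2)) • u1 ∧
      (∀ v : Vec n, (inner ℝ u1 v : ℝ) = 0 →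
        Matrix.toEuclideanLin Dstar v = (-(1 / 2 : ℝ)) • v)) ∧
    ∀ (u : Fin n → Vec n), Orthonormal ℝ u → u ⟨0, Nat.lt_of_lt_of_le Nat.zero_lt_two hn⟩ = u1 →
    ∀ (s : Fin n → ℝ), (∀ ℓ : Fin n, ℓ ≠ ⟨0, Nat.lt_of_lt_of_le Nat.zero_lt_two hn⟩ → s ℓ = 1 ∨ s ℓ = -1) →
    ∀ f : ℝ, 0 < f → f ≤ (Real.sqrt ((n : ℝ) - 1))⁻¹ →
    ∀ q0 : Vec n,
      q0 = (1 / 2 : ℝ) • (u1 + f • ∑ ℓ ∈ Finset.univ.filter (fun ℓ => ℓ ≠ ⟨0, Nat.lt_of_lt_of_le Nat.zero_lt_two hn⟩), s ℓ • u ℓ) →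
      ‖q0‖ ≤ 1 ∧
      ∀ M : ℝ, 1 / 2 < M → M ≤ ((n : ℝ) + 1) / 2 →
        projVec (eigSpan Dstar M) q0 = (1 / 2 : ℝ) • u1 ∧
        ‖projVec (eigSpan Dstar M) q0‖ = 1 / 2 ∧
        (0.49 : ℝ) ≤ ‖projVec (eigSpan Dstar M) q0‖ := by
  have hn0 : 0 < n := by omega
  have hn2 : (2 : ℝ) ≤ n := by exact_mod_cast hn
  have hu1_norm : ‖u1‖ = 1 := hu1 ▸ norm_inv_sqrt_smul_onesV hn0
  replace hDstar : Dstar = (-((n : ℝ) / 2)) • vecMulVec ⇑u1 ⇑u1 - (1 / 2 : ℝ) • 1 := hDstar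
  subst hDstar
  refine ⟨⟨hu1 ▸ isSlutsky_neg_half_smul_vecMulVec_sub_half_smul_one hn0, ?_,
    fun v => toEuclideanLin_smul_vecMulVec_sub_smul_one_of_inner_eq_zero u1 _ _⟩, ?_⟩
  · rw [toEuclideanLin_smul_vecMulVec_sub_smul_one_self u1 _ _ hu1_norm]
    ring_nf
  intro u hu hu0 s hs f hf hf' q0 hq0
  set F := Finset.univ.filter (fun ℓ => ℓ ≠ (⟨0, Nat.lt_of_lt_of_le Nat.zero_lt_two hn⟩ : Fin n))
  set w := ∑ ℓ ∈ F, s ℓ • u ℓ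
  have hw_inner : inner ℝ u1 w = 0 := hu0 ▸ hu.inner_right_sum_of_notMem s (by simp [F])
  have hfw : ‖f • w‖ ≤ 1 :=
    norm_smul_le_one_of_le_inv_norm hf.le (hu.norm_sum_filter_ne_smul hs ▸ hf')
  have hq0_inner : inner ℝ u1 q0 = 1 / 2 := by
    rw [hq0, inner_smul_right, inner_add_right, inner_smul_right, real_inner_self_eq_norm_sq,
      hu1_norm, hw_inner]
    norm_num
  refine ⟨?_, fun M hM hM' => ?_⟩
  · calc ‖q0‖ ≤ 1 / 2 * (‖u1‖ + ‖f • w‖) := by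
          rw [hq0, norm_smul, Real.norm_of_nonneg (by norm_num)]
          gcongr
          exact norm_add_le _ _
      _ ≤ 1 := by rw [hu1_norm]; linarith
  rw [eigSpan_smul_vecMulVec_sub_smul_one u1 _ _ hu1_norm (by rwa [abs_of_pos (by norm_num)])
    (by rw [abs_of_neg (by linarith)]; linarith), projVec_span_singleton hu1_norm, hq0_inner]
  refine ⟨rfl, ?_, ?_⟩ <;> norm_num [norm_smul, hu1_norm]
end
end
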